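/- Let B₁, B₂ ⊆ Fin 3 × Fin 3 both be strictly closing (SC) configurations, and form the combined black set B ⊆ Fin 6 × Fin 3 consisting of the cells (i,j) with i ≤ 2 and (i,j) ∈ B₁ together with the cells (i+3, j) with (i,j) ∈ B₂. Then no connected subset of B (under face-adjacency in Fin 6 × Fin 3) meets two distinct sides of the 6×3 rectangle, where the four sides are {(i,j) : i = 0}, {(i,j) : i = 5}, {(i,j) : j = 0}, and {(i,j) : j = 2}. -/

import Mathlib

/-!
Follow a path of black cells in `C` from a cell on one side of the rectangle, starting in one of
the two squares. The cells of `C` in that square reachable from the start without leaving the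
square form a connected black set `K` of an SC square. If the path ends in `K`, then `K` meets two
distinct sides of the square. Otherwise the path leaves `K`, which it can only do by crossing the
common face into the other square; then `K` meets the common face, a side of the square distinct
from the one it started on, because the common face lies inside the rectangle.
-/

/-- Face-adjacency on the 3×3 grid. -/
def Adj3 (a b : Fin 3 × Fin 3) : Prop :=
  (a.1 = b.1 ∧ (a.2.val + 1 = b.2.val ∨ b.2.val + 1 = a.2.val)) ∨
  (a.2 = b.2 ∧ (a.1.val + 1 = b.1.val ∨ b.1.val + 1 = a.1.val))

/-- A set of cells of the 3×3 grid is connected under face-adjacency. -/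
def Connected3 (C : Set (Fin 3 × Fin 3)) : Prop :=
  ∀ x ∈ C, ∀ y ∈ C, Relation.ReflTransGen (fun a b => a ∈ C ∧ b ∈ C ∧ Adj3 a b) x y

/-- The four sides of the 3×3 grid. -/
def Sides3 : Set (Set (Fin 3 × Fin 3)) :=
  {{c | c.1 = 0}, {c | c.1 = 2}, {c | c.2 = 0}, {c | c.2 = 2}}

/-- A set of black cells of the 3×3 grid is a strictly closing (SC) configuration:
no connected subset of it meets two distinct sides of the grid. -/
def SC3 (B : Set (Fin 3 × Fin 3)) : Prop :=
  ∀ C ⊆ B, Connected3 C →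
    ¬ ∃ S₁ ∈ Sides3, ∃ S₂ ∈ Sides3, S₁ ≠ S₂ ∧ (C ∩ S₁).Nonempty ∧ (C ∩ S₂).Nonempty

/-- Face-adjacency on the 6×3 grid. -/
def Adj63 (a b : Fin 6 × Fin 3) : Prop :=
  (a.1 = b.1 ∧ (a.2.val + 1 = b.2.val ∨ b.2.val + 1 = a.2.val)) ∨
  (a.2 = b.2 ∧ (a.1.val + 1 = b.1.val ∨ b.1.val + 1 = a.1.val))

/-- A set of cells of the 6×3 grid is connected under face-adjacency. -/
def Connected63 (C : Set (Fin 6 × Fin 3)) : Prop :=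
  ∀ x ∈ C, ∀ y ∈ C, Relation.ReflTransGen (fun a b => a ∈ C ∧ b ∈ C ∧ Adj63 a b) x y

/-- The four sides of the 6×3 rectangle. -/
def Sides63 : Set (Set (Fin 6 × Fin 3)) :=
  {{c | c.1 = 0}, {c | c.1 = 5}, {c | c.2 = 0}, {c | c.2 = 2}}

/-- Embedding of the left 3×3 square into the 6×3 rectangle. -/
def embLeft (p : Fin 3 × Fin 3) : Fin 6 × Fin 3 := (p.1.castLE (by omega), p.2)

/-- Embedding of the right 3×3 square into the 6×3 rectangle. -/
def embRight (p : Fin 3 × Fin 3) : Fin 6 × Fin 3 := (p.1.addNat 3, p.2)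

namespace Relation

variable {α : Type*} {r : α → α → Prop} {p : α → Prop} {a b : α}

theorem ReflTransGen.exists_rel_of_not (h : ReflTransGen r a b) (ha : p a) (hb : ¬ p b) :
    ∃ x y, p x ∧ ¬ p y ∧ r x y := by
  induction h with
  | refl => exact absurd ha hb
  | @tail c d _ hcd ih =>
    by_cases hc : p c
    exacts [⟨c, d, hc, hb, hcd⟩, ih hc]

end Relation

section Component

open Relation

variable {α : Type*} (r : α → α → Prop)

def ChainConnected (D : Set α) : Prop :=
  ∀ x ∈ D, ∀ y ∈ D, ReflTransGen (fun a b => a ∈ D ∧ b ∈ D ∧ r a b) x y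

def componentIn (s : Set α) (x : α) : Set α :=
  {y | ReflTransGen (fun a b => a ∈ s ∧ b ∈ s ∧ r a b) x y}

variable {r} {s : Set α} {x y z : α}

theorem mem_componentIn_self : x ∈ componentIn r s x := ReflTransGen.refl

theorem componentIn_subset (hx : x ∈ s) : componentIn r s x ⊆ s := fun y hy => by
  rcases hy.cases_tail with rfl | ⟨_, -, -, hy, -⟩
  exacts [hx, hy]

theorem mem_componentIn_of_rel (hx : x ∈ s) (hy : y ∈ componentIn r s x) (hz : z ∈ s)
    (hyz : r y z) : z ∈ componentIn r s x :=
  ReflTransGen.tail hy ⟨componentIn_subset hx hy, hz, hyz⟩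

theorem chainConnected_componentIn [Std.Symm r] (hx : x ∈ s) :
    ChainConnected r (componentIn r s x) := by
  set K := componentIn r s x
  have from_x : ∀ y ∈ K, ReflTransGen (fun a b => a ∈ K ∧ b ∈ K ∧ r a b) x y := by
    intro y hy
    induction hy with
    | refl => exact .refl
    | @tail b c hxb hbc ih =>
      exact ih.tail ⟨hxb, mem_componentIn_of_rel hx hxb hbc.2.1 hbc.2.2, hbc.2.2⟩
  intro y hy z hz
  refine .trans ?_ (from_x z hz)
  exact reflTransGen_swap.mp <| ReflTransGen.mono
    (fun _ _ ⟨ha, hb, hab⟩ => ⟨hb, ha, Std.Symm.symm _ _ hab⟩) _ _ (from_x y hy)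

end Component

def side3 : Fin 4 → Set (Fin 3 × Fin 3) :=
  ![{c | c.1 = 0}, {c | c.1 = 2}, {c | c.2 = 0}, {c | c.2 = 2}]

def side63 : Fin 4 → Set (Fin 6 × Fin 3) :=
  ![{c | c.1 = 0}, {c | c.1 = 5}, {c | c.2 = 0}, {c | c.2 = 2}]

theorem sides3_eq_range : Sides3 = Set.range side3 := by
  simp only [Sides3, side3, Matrix.range_cons, Matrix.range_empty, Set.union_empty,
    Set.singleton_union]

theorem sides63_eq_range : Sides63 = Set.range side63 := by
  simp only [Sides63, side63, Matrix.range_cons, Matrix.range_empty, Set.union_empty,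
    Set.singleton_union]

theorem side3_injective : Function.Injective side3 := by
  intro k l h
  fin_cases k <;> fin_cases l <;>
    simp only [side3, Set.ext_iff, Prod.forall, Fin.isValue, Fin.zero_eta, Fin.mk_one,
      Fin.reduceFinMk, Matrix.cons_val_zero, Matrix.cons_val_one, Matrix.cons_val,
      Set.mem_ofPred_eq] at h ⊢ <;>
    revert h <;> decide

instance : Std.Symm Adj3 where
  symm _ _ h := by unfold Adj3 at *; omega

theorem SC3.eq_of_mem_side {B D : Set (Fin 3 × Fin 3)} (hB : SC3 B) (hDB : D ⊆ B)
    (hD : Connected3 D) {a b : Fin 3 × Fin 3} {k l : Fin 4} (ha : a ∈ D) (hb : b ∈ D)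
    (hak : a ∈ side3 k) (hbl : b ∈ side3 l) : k = l := by
  by_contra hkl
  exact hB D hDB hD ⟨side3 k, sides3_eq_range ▸ ⟨k, rfl⟩, side3 l, sides3_eq_range ▸ ⟨l, rfl⟩,
    side3_injective.ne hkl, ⟨a, ha, hak⟩, ⟨b, hb, hbl⟩⟩

/-- `e` places a 3×3 square in the 6×3 rectangle so that it meets the cells `e'` of the other
square only across its side `face`. -/
structure IsFaceAttachment (e e' : Fin 3 × Fin 3 → Fin 6 × Fin 3) (face : Fin 4) : Prop where
  injective : e.Injective
  ne : ∀ a b, e a ≠ e' b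
  adj_of_adj : ∀ a b, Adj63 (e a) (e b) → Adj3 a b
  mem_face_of_adj : ∀ a b, Adj63 (e a) (e' b) → a ∈ side3 face
  mem_side_of_mem_side : ∀ a k, e a ∈ side63 k → a ∈ side3 k
  notMem_side_face : ∀ a, e a ∉ side63 face

theorem isFaceAttachment_embLeft : IsFaceAttachment embLeft embRight 1 where
  injective a b h := by
    simp only [embLeft, Prod.ext_iff, Fin.ext_iff, Fin.val_castLE] at h
    exact Prod.ext (Fin.ext (by omega)) (Fin.ext h.2)
  ne a b h := by
    simp only [embLeft, embRight, Prod.ext_iff, Fin.ext_iff, Fin.val_castLE, Fin.val_addNat] at h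
    omega
  adj_of_adj a b h := by
    simp only [Adj63, Adj3, embLeft, Fin.ext_iff, Fin.val_castLE] at h ⊢
    omega
  mem_face_of_adj a b h := by
    simp only [Adj63, embLeft, embRight, Fin.ext_iff, Fin.val_castLE, Fin.val_addNat] at h
    simp only [side3, Matrix.cons_val_one, Matrix.cons_val_zero, Set.mem_ofPred_eq, Fin.ext_iff,
      Fin.coe_ofNat_eq_mod]
    omega
  mem_side_of_mem_side a k h := by
    fin_cases k <;>
      simp only [side3, side63, embLeft, Fin.isValue, Fin.zero_eta, Fin.mk_one, Fin.reduceFinMk,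
        Matrix.cons_val_zero, Matrix.cons_val_one, Matrix.cons_val, Set.mem_ofPred_eq] at h ⊢ <;>
      simp only [Fin.ext_iff, Fin.val_castLE, Fin.coe_ofNat_eq_mod] at h ⊢ <;> omega
  notMem_side_face a h := by
    simp only [side63, embLeft, Matrix.cons_val_zero, Matrix.cons_val_one, Set.mem_ofPred_eq] at h
    simp only [Fin.ext_iff, Fin.val_castLE, Fin.coe_ofNat_eq_mod] at h
    omega

theorem isFaceAttachment_embRight : IsFaceAttachment embRight embLeft 0 where
  injective a b h := by
    simp only [embRight, Prod.ext_iff, Fin.ext_iff, Fin.val_addNat] at h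
    exact Prod.ext (Fin.ext (by omega)) (Fin.ext h.2)
  ne a b h := by
    simp only [embLeft, embRight, Prod.ext_iff, Fin.ext_iff, Fin.val_castLE, Fin.val_addNat] at h
    omega
  adj_of_adj a b h := by
    simp only [Adj63, Adj3, embRight, Fin.ext_iff, Fin.val_addNat] at h ⊢
    omega
  mem_face_of_adj a b h := by
    simp only [Adj63, embLeft, embRight, Fin.ext_iff, Fin.val_castLE, Fin.val_addNat] at h
    simp only [side3, Matrix.cons_val_zero, Set.mem_ofPred_eq, Fin.ext_iff, Fin.coe_ofNat_eq_mod]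
    omega
  mem_side_of_mem_side a k h := by
    fin_cases k <;>
      simp only [side3, side63, embRight, Fin.isValue, Fin.zero_eta, Fin.mk_one, Fin.reduceFinMk,
        Matrix.cons_val_zero, Matrix.cons_val_one, Matrix.cons_val, Set.mem_ofPred_eq] at h ⊢ <;>
      simp only [Fin.ext_iff, Fin.val_addNat, Fin.coe_ofNat_eq_mod] at h ⊢ <;> omega
  notMem_side_face a h := by
    simp only [side63, embRight, Matrix.cons_val_zero, Set.mem_ofPred_eq] at h
    simp only [Fin.ext_iff, Fin.val_addNat, Fin.coe_ofNat_eq_mod] at h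
    omega

theorem IsFaceAttachment.false_of_mem_sides {e e' : Fin 3 × Fin 3 → Fin 6 × Fin 3}
    {face : Fin 4} (he : IsFaceAttachment e e' face) {B B' : Set (Fin 3 × Fin 3)} (hB : SC3 B)
    {C : Set (Fin 6 × Fin 3)} (hC : C ⊆ e '' B ∪ e' '' B') (hconn : Connected63 C)
    {x₀ : Fin 3 × Fin 3} {y : Fin 6 × Fin 3} {k l : Fin 4} (hkl : k ≠ l)
    (hx : e x₀ ∈ C) (hxk : e x₀ ∈ side63 k) (hy : y ∈ C) (hyl : y ∈ side63 l) : False := by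
  have hpre : e ⁻¹' C ⊆ B := fun a ha => by
    rcases hC ha with ⟨b, hb, hba⟩ | ⟨b, -, hba⟩
    exacts [he.injective hba ▸ hb, he.ne a b hba.symm |>.elim]
  have hx₀ : x₀ ∈ e ⁻¹' C := hx
  set K := componentIn Adj3 (e ⁻¹' C) x₀
  have hKB : K ⊆ B := (componentIn_subset hx₀).trans hpre
  have hK : Connected3 K := chainConnected_componentIn hx₀
  have hx₀K : x₀ ∈ K := mem_componentIn_self
  have hx₀k := he.mem_side_of_mem_side x₀ k hxk
  by_cases hyK : y ∈ e '' K
  · obtain ⟨y₀, hy₀K, rfl⟩ := hyK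
    exact hkl (hB.eq_of_mem_side hKB hK hx₀K hy₀K hx₀k (he.mem_side_of_mem_side y₀ l hyl))
  obtain ⟨_, b, ⟨z, hzK, rfl⟩, hbK, -, hbC, hzb⟩ :=
    (hconn _ hx y hy).exists_rel_of_not (p := (· ∈ e '' K)) (Set.mem_image_of_mem e hx₀K) hyK
  rcases hC hbC with ⟨w, -, rfl⟩ | ⟨w, -, rfl⟩
  · exact hbK ⟨w, mem_componentIn_of_rel hx₀ hzK hbC (he.adj_of_adj z w hzb), rfl⟩
  · have hkface := hB.eq_of_mem_side hKB hK hx₀K hzK hx₀k (he.mem_face_of_adj z w hzb)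
    exact he.notMem_side_face x₀ (hkface ▸ hxk)

/-- Two SC squares attached face to face contain no connected black cluster joining two
distinct sides of the combined 6×3 rectangle. -/
theorem SC_squares_attached_do_not_connect (B₁ B₂ : Set (Fin 3 × Fin 3))
    (h₁ : SC3 B₁) (h₂ : SC3 B₂) :
    ∀ C ⊆ embLeft '' B₁ ∪ embRight '' B₂, Connected63 C →
      ¬ ∃ S₁ ∈ Sides63, ∃ S₂ ∈ Sides63, S₁ ≠ S₂ ∧ (C ∩ S₁).Nonempty ∧ (C ∩ S₂).Nonempty := by
  rintro C hC hconn ⟨S₁, hS₁, S₂, hS₂, hne, ⟨x, hxC, hxS⟩, ⟨y, hyC, hyS⟩⟩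
  rw [sides63_eq_range] at hS₁ hS₂
  obtain ⟨k, rfl⟩ := hS₁
  obtain ⟨l, rfl⟩ := hS₂
  have hkl : k ≠ l := fun h => hne (h ▸ rfl)
  rcases hC hxC with ⟨x₀, -, rfl⟩ | ⟨x₀, -, rfl⟩
  · exact isFaceAttachment_embLeft.false_of_mem_sides h₁ hC hconn hkl hxC hxS hyC hyS
  · exact isFaceAttachment_embRight.false_of_mem_sides h₂ (Set.union_comm _ _ ▸ hC) hconn hkl
      hxC hxS hyC hyS
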